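/- Let Γ be a congruence subgroup of SL₂(ℤ) (i.e. Γ(N) ⊆ Γ ⊆ SL₂(ℤ) for some N ≥ 1) and let M be an abelian group, regarded as a trivial Γ-module. Then the map φ ↦ f_φ, where f_φ(Γγ) := φ(γ·D_∞) for γ ∈ SL₂(ℤ), is a well-defined group isomorphism from Symb_Γ(M) = {additive homomorphisms φ : Δ₀ → M with φ(γ·D) = φ(D) for all γ ∈ Γ} onto the group Man_Γ(M) of Manin symbols, i.e. functions f : Γ\SL₂(ℤ) → M satisfying f(x) + f(x·S) = 0 and f(x) + f(x·R) + f(x·R²) = 0 for every right coset x, where x·g denotes the coset Γγg and S = [[0,−1],[1,0]], R = [[0,−1],[1,−1]]. -/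

import Mathlib

noncomputable section
open Matrix MatrixGroups

/-- the projective line `ℙ¹(ℚ)`, as the projectivization of `ℚ²` -/
abbrev ProjLine : Type := Projectivization ℚ (Fin 2 → ℚ)

lemma mulVecLin_injective (γ : GL (Fin 2) ℚ) :
    Function.Injective ((γ : Matrix (Fin 2) (Fin 2) ℚ).mulVecLin) := by
  have h : Function.LeftInverse (((γ⁻¹ : GL (Fin 2) ℚ) : Matrix (Fin 2) (Fin 2) ℚ).mulVecLin)
      (((γ : GL (Fin 2) ℚ) : Matrix (Fin 2) (Fin 2) ℚ).mulVecLin) := by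
    intro v
    have h1 : ((γ⁻¹ : GL (Fin 2) ℚ) : Matrix (Fin 2) (Fin 2) ℚ) *
        ((γ : GL (Fin 2) ℚ) : Matrix (Fin 2) (Fin 2) ℚ) = (1 : Matrix (Fin 2) (Fin 2) ℚ) := by
      rw [← Units.val_mul, inv_mul_cancel, Units.val_one]
    have h2 := congrFun (congrArg DFunLike.coe (congrArg Matrix.mulVecLin h1)) v
    rw [Matrix.mulVecLin_mul, Matrix.mulVecLin_one] at h2
    exact h2
  exact h.injective

private lemma projMap_congr {f g : (Fin 2 → ℚ) →ₗ[ℚ] (Fin 2 → ℚ)} (h : f = g)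
    (hf : Function.Injective f) (x : ProjLine) :
    Projectivization.map f hf x = Projectivization.map g (h ▸ hf) x := by
  subst h; rfl

/-- `GL₂(ℚ)` acts on `ℙ¹(ℚ)` by fractional linear transformations. -/
instance : MulAction (GL (Fin 2) ℚ) ProjLine where
  smul γ x := Projectivization.map ((γ : Matrix (Fin 2) (Fin 2) ℚ).mulVecLin)
    (mulVecLin_injective γ) x
  one_smul x := by
    have h1 : (((1 : GL (Fin 2) ℚ) : Matrix (Fin 2) (Fin 2) ℚ)).mulVecLin
        = (LinearMap.id : (Fin 2 → ℚ) →ₗ[ℚ] (Fin 2 → ℚ)) := by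
      simp [Matrix.mulVecLin_one]
    show Projectivization.map _ (mulVecLin_injective 1) x = x
    rw [projMap_congr h1]
    exact congrFun Projectivization.map_id x
  mul_smul a b x := by
    have h1 : (((a * b : GL (Fin 2) ℚ) : Matrix (Fin 2) (Fin 2) ℚ)).mulVecLin
        = ((a : Matrix (Fin 2) (Fin 2) ℚ).mulVecLin).comp
            ((b : Matrix (Fin 2) (Fin 2) ℚ).mulVecLin) := by
      simp [Units.val_mul, Matrix.mulVecLin_mul]
    show Projectivization.map _ (mulVecLin_injective (a * b)) x = _
    rw [projMap_congr h1]
    exact congrFun (Projectivization.map_comp _ (mulVecLin_injective b) _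
      (mulVecLin_injective a)) x

/-- the total degree of a divisor on `ℙ¹(ℚ)` -/
def degree : (ProjLine →₀ ℤ) →+ ℤ := Finsupp.liftAddHom fun _ => AddMonoidHom.id ℤ

/-- `Δ₀ = Div⁰(ℙ¹(ℚ))`, the group of degree-zero divisors on `ℙ¹(ℚ)` -/
def Delta0 : AddSubgroup (ProjLine →₀ ℤ) := degree.ker

lemma degree_mapDomain (f : ProjLine → ProjLine) (D : ProjLine →₀ ℤ) :
    degree (Finsupp.mapDomain f D) = degree D := by
  simp only [degree, Finsupp.liftAddHom_apply, AddMonoidHom.id_apply]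
  exact Finsupp.sum_mapDomain_index (fun _ => rfl) (fun _ _ _ => rfl)

/-- the induced action of `γ ∈ GL₂(ℚ)` on degree-zero divisors -/
def smulDiv (γ : GL (Fin 2) ℚ) (D : Delta0) : Delta0 :=
  ⟨Finsupp.mapDomain (fun x => γ • x) D.1, by
    have hD : degree D.1 = 0 := AddMonoidHom.mem_ker.mp D.2
    show Finsupp.mapDomain _ _ ∈ degree.ker
    rw [AddMonoidHom.mem_ker, degree_mapDomain, hD]⟩

/-- the point `∞ = [1:0] ∈ ℙ¹(ℚ)` -/
def inftyPt : ProjLine := Projectivization.mk ℚ ![1, 0] (by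
  intro h; simpa using congrFun h 0)

/-- the point `0 = [0:1] ∈ ℙ¹(ℚ)` -/
def zeroPt : ProjLine := Projectivization.mk ℚ ![0, 1] (by
  intro h; simpa using congrFun h 1)

/-- the divisor `D_∞ = [∞] − [0] ∈ Δ₀` -/
def Dinf : Delta0 :=
  ⟨Finsupp.single inftyPt 1 - Finsupp.single zeroPt 1, by
    show _ ∈ degree.ker
    rw [AddMonoidHom.mem_ker, map_sub]
    simp [degree, Finsupp.liftAddHom_apply_single]⟩


/-- the embedding `SL₂(ℤ) → GL₂(ℚ)` -/
def toGL2Q : Matrix.SpecialLinearGroup (Fin 2) ℤ →* GL (Fin 2) ℚ :=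
  Matrix.SpecialLinearGroup.toGL.comp (Matrix.SpecialLinearGroup.map (Int.castRingHom ℚ))

/-- right multiplication `Γγ ↦ Γγg` on the set of right cosets `Γ\SL₂(ℤ)` -/
def cosetMul (Γ : Subgroup (Matrix.SpecialLinearGroup (Fin 2) ℤ))
    (x : Quotient (QuotientGroup.rightRel Γ)) (g : Matrix.SpecialLinearGroup (Fin 2) ℤ) :
    Quotient (QuotientGroup.rightRel Γ) :=
  Quotient.map' (· * g)
    (fun a b h => by
      rw [QuotientGroup.rightRel_apply] at h ⊢
      simpa [_root_.mul_inv_rev, mul_assoc] using h) x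

/-- the matrix `S = [[0,−1],[1,0]]` in `SL₂(ℤ)` -/
def Sz : Matrix.SpecialLinearGroup (Fin 2) ℤ :=
  ⟨!![0, -1; 1, 0], by norm_num [Matrix.det_fin_two_of]⟩

/-- the matrix `R = [[0,−1],[1,−1]]` in `SL₂(ℤ)` -/
def Rz : Matrix.SpecialLinearGroup (Fin 2) ℤ :=
  ⟨!![0, -1; 1, -1], by norm_num [Matrix.det_fin_two_of]⟩

variable (Γ : Subgroup (Matrix.SpecialLinearGroup (Fin 2) ℤ))
variable (M : Type*) [AddCommGroup M]

/-- `Symb_Γ(M)`: the group of `M`-valued modular symbols for `Γ`, where `M`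
is a trivial `Γ`-module: additive homomorphisms `φ : Δ₀ → M` with
`φ(γ·D) = φ(D)` for all `γ ∈ Γ`. -/
def SymbGroup : AddSubgroup (Delta0 →+ M) where
  carrier := {φ | ∀ γ ∈ Γ, ∀ D : Delta0, φ (smulDiv (toGL2Q γ) D) = φ D}
  zero_mem' := by intro γ hγ D; simp
  add_mem' := by
    intro a b ha hb γ hγ D
    simp [ha γ hγ D, hb γ hγ D]
  neg_mem' := by
    intro a ha γ hγ D
    simp [ha γ hγ D]

private lemma sum3_eq_zero {p q r s t u : M}
    (h1 : p + r + t = 0) (h2 : q + s + u = 0) :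
    (p + q) + (r + s) + (t + u) = 0 := by
  calc (p + q) + (r + s) + (t + u) = (p + r + t) + (q + s + u) := by abel
    _ = 0 := by rw [h1, h2, add_zero]

/-- `Man_Γ(M)`: the group of `M`-valued Manin symbols for `Γ`: functions
`f : Γ\SL₂(ℤ) → M` with `f(x) + f(x·S) = 0` and
`f(x) + f(x·R) + f(x·R²) = 0` for every right coset `x`. -/
def ManGroup : AddSubgroup (Quotient (QuotientGroup.rightRel Γ) → M) where
  carrier := {f | ∀ x,
    f x + f (cosetMul Γ x Sz) = 0 ∧
    f x + f (cosetMul Γ x Rz) + f (cosetMul Γ x (Rz ^ 2)) = 0}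
  zero_mem' := by intro x; simp
  add_mem' := by
    intro a b ha hb x
    obtain ⟨ha1, ha2⟩ := ha x
    obtain ⟨hb1, hb2⟩ := hb x
    refine ⟨?_, ?_⟩
    · simp only [Pi.add_apply]
      rw [add_add_add_comm, ha1, hb1, add_zero]
    · simp only [Pi.add_apply]
      exact sum3_eq_zero M ha2 hb2
  neg_mem' := by
    intro a ha x
    obtain ⟨ha1, ha2⟩ := ha x
    refine ⟨?_, ?_⟩
    · simp only [Pi.neg_apply]
      rw [← neg_add, ha1, neg_zero]
    · simp only [Pi.neg_apply]
      rw [← neg_add, ← neg_add, ha2, neg_zero]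

/-!
Every cusp `x ≠ ∞` of `ℙ¹(ℚ)` is `g • ∞` for exactly one `g = [[a, b], [c, d]] ∈ SL₂(ℤ)` with
`0 ≤ d < c`, and then `g • 0 = b / d` has smaller denominator than `x = a / c`. Descending along
these reduced matrices, `[x] - [∞]` is a sum of translates `g • D_∞ = [g • ∞] - [g • 0]`, so these
translates generate `Δ₀`: this gives injectivity, and reduces `Γ`-invariance of a symbol to its
values on them.

Conversely, for a Manin symbol `F`, the same descent defines `ψ : ℙ¹(ℚ) → M` with `ψ(∞) = 0` and
`ψ(g • ∞) - ψ(g • 0) = F(g)` for reduced `g`. The defect `g ↦ ψ(g • ∞) - ψ(g • 0) - F(g)` again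
satisfies the Manin relations and vanishes on reduced matrices; since `T = R²S`, an induction on the
bottom row of `g` shows that it vanishes everywhere. The symbol `D ↦ ∑ D(x) ψ(x)` then maps to `F`.
-/
namespace Manin

open ModularGroup

lemma coe_mul_apply (g h : SL(2, ℤ)) (i j : Fin 2) :
    (g * h) i j = g i 0 * h 0 j + g i 1 * h 1 j := by
  rw [Matrix.SpecialLinearGroup.coe_mul, Matrix.mul_apply, Fin.sum_univ_two]

lemma coe_Sz : (Sz : Matrix (Fin 2) (Fin 2) ℤ) = !![0, -1; 1, 0] := rfl

lemma coe_Rz : (Rz : Matrix (Fin 2) (Fin 2) ℤ) = !![0, -1; 1, -1] := rfl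

lemma det_eq_one (g : SL(2, ℤ)) : g 0 0 * g 1 1 - g 0 1 * g 1 0 = 1 := by
  have := g.2
  rwa [Matrix.det_fin_two] at this

lemma Rz_sq_mul_Sz : Rz ^ 2 * Sz = T := by
  ext i j; fin_cases i <;> fin_cases j <;> rfl

lemma firstCol_ne_zero (g : SL(2, ℤ)) : ![(g 0 0 : ℚ), (g 1 0 : ℚ)] ≠ 0 := by
  intro h
  have h0 : g 0 0 = 0 := by simpa using congrFun h 0
  have h1 : g 1 0 = 0 := by simpa using congrFun h 1
  simpa [h0, h1] using det_eq_one g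

lemma smul_inftyPt (g : SL(2, ℤ)) :
    toGL2Q g • inftyPt = Projectivization.mk ℚ ![(g 0 0 : ℚ), g 1 0] (firstCol_ne_zero g) := by
  show Projectivization.map _ (mulVecLin_injective (toGL2Q g)) _ = _
  rw [inftyPt, Projectivization.map_mk]
  congr 1
  ext i; fin_cases i <;> simp [toGL2Q, Matrix.mulVec, dotProduct, Fin.sum_univ_two]

lemma smul_inftyPt_eq_inftyPt_iff (g : SL(2, ℤ)) :
    toGL2Q g • inftyPt = inftyPt ↔ g 1 0 = 0 := by
  rw [smul_inftyPt, inftyPt, Projectivization.mk_eq_mk_iff']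
  constructor
  · rintro ⟨t, ht⟩
    simpa using (congrFun ht 1).symm
  · intro h
    exact ⟨g 0 0, by ext i; fin_cases i <;> simp [h]⟩

lemma mul_smul_inftyPt {g h : SL(2, ℤ)} (hh : h 1 0 = 0) :
    toGL2Q (g * h) • inftyPt = toGL2Q g • inftyPt := by
  rw [map_mul, mul_smul, (smul_inftyPt_eq_inftyPt_iff h).2 hh]

lemma Sz_smul_inftyPt : toGL2Q Sz • inftyPt = zeroPt := by
  rw [smul_inftyPt, zeroPt]
  congr 1

lemma Rz_smul_inftyPt : toGL2Q Rz • inftyPt = zeroPt := by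
  rw [smul_inftyPt, zeroPt]
  congr 1

lemma Sz_smul_zeroPt : toGL2Q Sz • zeroPt = inftyPt := by
  rw [← Sz_smul_inftyPt, ← mul_smul, ← map_mul, smul_inftyPt_eq_inftyPt_iff]
  simp [coe_mul_apply, coe_Sz]

lemma Rz_sq_smul_zeroPt : toGL2Q (Rz ^ 2) • zeroPt = inftyPt := by
  rw [← Rz_smul_inftyPt, ← mul_smul, ← map_mul, smul_inftyPt_eq_inftyPt_iff]
  simp [pow_two, coe_mul_apply, coe_Rz]

lemma mul_Sz_smul_inftyPt (g : SL(2, ℤ)) : toGL2Q (g * Sz) • inftyPt = toGL2Q g • zeroPt := by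
  rw [map_mul, mul_smul, Sz_smul_inftyPt]

lemma mul_Sz_smul_zeroPt (g : SL(2, ℤ)) : toGL2Q (g * Sz) • zeroPt = toGL2Q g • inftyPt := by
  rw [map_mul, mul_smul, Sz_smul_zeroPt]

lemma mul_Rz_smul_inftyPt (g : SL(2, ℤ)) : toGL2Q (g * Rz) • inftyPt = toGL2Q g • zeroPt := by
  rw [map_mul, mul_smul, Rz_smul_inftyPt]

lemma mul_Rz_sq_smul_inftyPt (g : SL(2, ℤ)) :
    toGL2Q (g * Rz ^ 2) • inftyPt = toGL2Q (g * Rz) • zeroPt := by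
  rw [pow_two, ← mul_assoc, mul_Rz_smul_inftyPt]

lemma mul_Rz_sq_smul_zeroPt (g : SL(2, ℤ)) :
    toGL2Q (g * Rz ^ 2) • zeroPt = toGL2Q g • inftyPt := by
  rw [map_mul, mul_smul, Rz_sq_smul_zeroPt]

lemma exists_smul_inftyPt_eq (x : ProjLine) : ∃ g : SL(2, ℤ), toGL2Q g • inftyPt = x := by
  induction x using Projectivization.ind with
  | h v hv =>
  by_cases hv1 : v 1 = 0
  · refine ⟨1, ?_⟩
    rw [map_one, one_smul, inftyPt, Projectivization.mk_eq_mk_iff']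
    refine ⟨(v 0)⁻¹, ?_⟩
    have hv0 : v 0 ≠ 0 := fun h0 => hv (by ext i; fin_cases i <;> simp [h0, hv1])
    ext i; fin_cases i <;> simp [hv0, hv1]
  · set r : ℚ := v 0 / v 1
    obtain ⟨u, w, huw⟩ : IsCoprime r.num r.den := Int.isCoprime_iff_gcd_eq_one.2 r.reduced
    let g : SL(2, ℤ) := ⟨!![r.num, -w; r.den, u], by
      rw [Matrix.det_fin_two_of]; linear_combination huw⟩
    refine ⟨g, ?_⟩
    rw [smul_inftyPt, Projectivization.mk_eq_mk_iff']
    refine ⟨r.den / v 1, ?_⟩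
    have hr : r.den / v 1 * v 0 = r.num := by
      rw [← Rat.mul_den_eq_num]; show _ = v 0 / v 1 * _; ring
    ext i; fin_cases i <;> simp [g, hr, hv1]

lemma exists_eq_mul_of_smul_inftyPt_eq {g h : SL(2, ℤ)}
    (hgh : toGL2Q g • inftyPt = toGL2Q h • inftyPt) : ∃ u : SL(2, ℤ), u 1 0 = 0 ∧ h = g * u := by
  refine ⟨g⁻¹ * h, ?_, (mul_inv_cancel_left g h).symm⟩
  rw [← smul_inftyPt_eq_inftyPt_iff, map_mul, mul_smul, ← hgh, map_inv, inv_smul_smul]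

lemma mul_apply_one_zero_of_apply_one_zero (g : SL(2, ℤ)) {u : SL(2, ℤ)} (hu : u 1 0 = 0) :
    (g * u) 1 0 = g 1 0 * u 0 0 := by
  simp [coe_mul_apply, hu]

def IsReduced (g : SL(2, ℤ)) : Prop := 0 ≤ g 1 1 ∧ g 1 1 < g 1 0

lemma IsReduced.eq_of_smul_inftyPt_eq {g h : SL(2, ℤ)} (hg : IsReduced g) (hh : IsReduced h)
    (hgh : toGL2Q g • inftyPt = toGL2Q h • inftyPt) : g = h := by
  obtain ⟨u, hu, rfl⟩ := exists_eq_mul_of_smul_inftyPt_eq hgh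
  have hdet : u 0 0 * u 1 1 = 1 := by simpa [hu] using det_eq_one u
  have hc : (g * u) 1 0 = g 1 0 * u 0 0 := mul_apply_one_zero_of_apply_one_zero g hu
  have hd : (g * u) 1 1 = g 1 0 * u 0 1 + g 1 1 * u 1 1 := coe_mul_apply g u 1 1
  obtain ⟨hg0, hg1⟩ := hg
  obtain ⟨hh0, hh1⟩ := hh
  have ha : u 0 0 = 1 := Int.eq_one_of_mul_eq_one_right
    (pos_of_mul_pos_right (hc ▸ hh0.trans_lt hh1) (by omega)).le hdet
  have hd' : u 1 1 = 1 := by simpa [ha] using hdet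
  have hb : u 0 1 = 0 := by
    rw [hc, ha] at hh1
    rw [hd, hd'] at hh0 hh1
    rcases lt_trichotomy (u 0 1) 0 with h | h | h <;> [nlinarith; exact h; nlinarith]
  have hu1 : u = 1 := by
    ext i j; fin_cases i <;> fin_cases j <;> simp [ha, hb, hu, hd']
  rw [hu1, mul_one]

lemma exists_isReduced_smul_inftyPt_eq {x : ProjLine} (hx : x ≠ inftyPt) :
    ∃ g, IsReduced g ∧ toGL2Q g • inftyPt = x := by
  obtain ⟨h, rfl⟩ := exists_smul_inftyPt_eq x
  have hc : h 1 0 ≠ 0 := fun hc => hx ((smul_inftyPt_eq_inftyPt_iff h).2 hc)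
  obtain ⟨h', hc', hh'⟩ : ∃ h', 0 < h' 1 0 ∧ toGL2Q h' • inftyPt = toGL2Q h • inftyPt := by
    rcases hc.lt_or_gt with hc | hc
    · exact ⟨h * (Sz * Sz), by simp [coe_mul_apply, coe_Sz]; omega,
        mul_smul_inftyPt (by simp [coe_mul_apply, coe_Sz])⟩
    · exact ⟨h, hc, rfl⟩
  refine ⟨h' * T ^ (-(h' 1 1 / h' 1 0)), ⟨?_, ?_⟩,
    (mul_smul_inftyPt (by simp [coe_T_zpow])).trans hh'⟩
  all_goals simp only [coe_mul_apply, coe_T_zpow]; simp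
  · linarith [Int.emod_def (h' 1 1) (h' 1 0), Int.emod_nonneg (h' 1 1) hc'.ne']
  · linarith [Int.emod_def (h' 1 1) (h' 1 0), Int.emod_lt_of_pos (h' 1 1) hc']

/-- The denominator `|c|` of the cusp `x = g • ∞ = a / c`. -/
def cuspDen (x : ProjLine) : ℕ := ((exists_smul_inftyPt_eq x).choose 1 0).natAbs

lemma cuspDen_smul_inftyPt (h : SL(2, ℤ)) : cuspDen (toGL2Q h • inftyPt) = (h 1 0).natAbs := by
  obtain ⟨u, hu, hh⟩ :=
    exists_eq_mul_of_smul_inftyPt_eq (exists_smul_inftyPt_eq (toGL2Q h • inftyPt)).choose_spec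
  have hdet : u 0 0 * u 1 1 = 1 := by simpa [hu] using det_eq_one u
  have ha : (u 0 0).natAbs = 1 := by
    rcases Int.eq_one_or_neg_one_of_mul_eq_one hdet with h | h <;> simp [h]
  conv_rhs => rw [hh, mul_apply_one_zero_of_apply_one_zero _ hu, Int.natAbs_mul, ha, mul_one]
  rfl

lemma IsReduced.cuspDen_smul_zeroPt_lt {g : SL(2, ℤ)} (hg : IsReduced g) :
    cuspDen (toGL2Q g • zeroPt) < cuspDen (toGL2Q g • inftyPt) := by
  obtain ⟨hd, hdc⟩ := hg
  rw [← Sz_smul_inftyPt, ← mul_smul, ← map_mul, cuspDen_smul_inftyPt, cuspDen_smul_inftyPt]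
  simp [coe_mul_apply, coe_Sz]
  omega

theorem cusp_induction {P : ProjLine → Prop} (hinf : P inftyPt)
    (step : ∀ g, IsReduced g → P (toGL2Q g • zeroPt) → P (toGL2Q g • inftyPt)) (x : ProjLine) :
    P x := by
  by_cases hx : x = inftyPt
  · exact hx ▸ hinf
  obtain ⟨g, hg, hgx⟩ := exists_isReduced_smul_inftyPt_eq hx
  exact hgx ▸ step g hg (cusp_induction hinf step _)
termination_by cuspDen x
decreasing_by exact hgx ▸ hg.cuspDen_smul_zeroPt_lt

lemma degree_single (x : ProjLine) (n : ℤ) : degree (Finsupp.single x n) = n := by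
  simp [degree]

def pointDiff (x y : ProjLine) : Delta0 :=
  ⟨Finsupp.single x 1 - Finsupp.single y 1, by
    rw [Delta0, AddMonoidHom.mem_ker, map_sub, degree_single, degree_single, sub_self]⟩

lemma coe_pointDiff (x y : ProjLine) :
    (pointDiff x y : ProjLine →₀ ℤ) = Finsupp.single x 1 - Finsupp.single y 1 := rfl

lemma Dinf_eq_pointDiff : Dinf = pointDiff inftyPt zeroPt := rfl

lemma pointDiff_self (x : ProjLine) : pointDiff x x = 0 :=
  Subtype.ext (sub_self _)

lemma pointDiff_add_pointDiff (x y z : ProjLine) :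
    pointDiff x y + pointDiff y z = pointDiff x z :=
  Subtype.ext (sub_add_sub_cancel _ _ _)

lemma smulDiv_pointDiff (γ : GL (Fin 2) ℚ) (x y : ProjLine) :
    smulDiv γ (pointDiff x y) = pointDiff (γ • x) (γ • y) :=
  Subtype.ext (by simp [smulDiv, coe_pointDiff, Finsupp.mapDomain_sub])

lemma smulDiv_mul (γ δ : GL (Fin 2) ℚ) (D : Delta0) :
    smulDiv (γ * δ) D = smulDiv γ (smulDiv δ D) := by
  refine Subtype.ext ?_
  simp only [smulDiv, ← Finsupp.mapDomain_comp]
  congr 1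
  funext x
  exact mul_smul γ δ x

def smulDivHom (γ : GL (Fin 2) ℚ) : Delta0 →+ Delta0 :=
  AddMonoidHom.mk' (smulDiv γ) fun _ _ => Subtype.ext Finsupp.mapDomain_add

lemma smulDivHom_apply (γ : GL (Fin 2) ℚ) (D : Delta0) : smulDivHom γ D = smulDiv γ D := rfl

def toDelta0 : (ProjLine →₀ ℤ) →+ Delta0 where
  toFun D := ⟨D - degree D • Finsupp.single inftyPt 1, by
    rw [Delta0, AddMonoidHom.mem_ker, map_sub, map_zsmul, degree_single, smul_eq_mul, mul_one,
      sub_self]⟩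
  map_zero' := Subtype.ext (by simp)
  map_add' D E := Subtype.ext (by simp only [map_add, add_smul, AddSubgroup.coe_add]; abel)

lemma toDelta0_coe (D : Delta0) : toDelta0 D = D :=
  Subtype.ext (by simp [toDelta0, AddMonoidHom.mem_ker.mp D.2])

lemma toDelta0_single (x : ProjLine) (n : ℤ) :
    toDelta0 (Finsupp.single x n) = n • pointDiff x inftyPt :=
  Subtype.ext (by simp [toDelta0, coe_pointDiff, degree_single, smul_sub])

variable {A : Type*} [AddCommGroup A]

lemma hom_ext_pointDiff {φ₁ φ₂ : Delta0 →+ A}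
    (h : ∀ x, φ₁ (pointDiff x inftyPt) = φ₂ (pointDiff x inftyPt)) : φ₁ = φ₂ := by
  have hcomp : φ₁.comp toDelta0 = φ₂.comp toDelta0 :=
    Finsupp.addHom_ext fun x n => by simp [toDelta0_single, h]
  ext D
  rw [← toDelta0_coe D]
  exact DFunLike.congr_fun hcomp D.1

lemma hom_ext {φ₁ φ₂ : Delta0 →+ A}
    (h : ∀ g, φ₁ (smulDiv (toGL2Q g) Dinf) = φ₂ (smulDiv (toGL2Q g) Dinf)) : φ₁ = φ₂ := by
  refine hom_ext_pointDiff (cusp_induction (by simp [pointDiff_self]) fun g _ ih => ?_)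
  rw [← pointDiff_add_pointDiff _ (toGL2Q g • zeroPt), map_add, map_add, ih,
    ← smulDiv_pointDiff, ← Dinf_eq_pointDiff, h]

lemma Dinf_add_smulDiv_Sz : Dinf + smulDiv (toGL2Q Sz) Dinf = 0 := by
  rw [Dinf_eq_pointDiff, smulDiv_pointDiff, Sz_smul_inftyPt, Sz_smul_zeroPt,
    pointDiff_add_pointDiff, pointDiff_self]

lemma Dinf_add_smulDiv_Rz_add_smulDiv_Rz_sq :
    Dinf + smulDiv (toGL2Q Rz) Dinf + smulDiv (toGL2Q (Rz ^ 2)) Dinf = 0 := by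
  rw [Dinf_eq_pointDiff, smulDiv_pointDiff, smulDiv_pointDiff, Rz_smul_inftyPt,
    Rz_sq_smul_zeroPt, pow_two, map_mul, mul_smul, Rz_smul_inftyPt, pointDiff_add_pointDiff,
    pointDiff_add_pointDiff, pointDiff_self]

structure ManinRelations (P : SL(2, ℤ) → A) : Prop where
  add_mul_Sz : ∀ g, P g + P (g * Sz) = 0
  add_mul_Rz_add_mul_Rz_sq : ∀ g, P g + P (g * Rz) + P (g * Rz ^ 2) = 0

namespace ManinRelations

variable {P : SL(2, ℤ) → A}

lemma apply_mul_Sz (hP : ManinRelations P) (g : SL(2, ℤ)) : P (g * Sz) = -P g :=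
  eq_neg_of_add_eq_zero_right (hP.add_mul_Sz g)

lemma apply_mul_Sz_mul_Sz (hP : ManinRelations P) (g : SL(2, ℤ)) : P (g * Sz * Sz) = P g := by
  rw [hP.apply_mul_Sz, hP.apply_mul_Sz, neg_neg]

lemma apply_mul_Sz_mul_Sz_mul_Sz (hP : ManinRelations P) (g : SL(2, ℤ)) :
    P (g * Sz * Sz * Sz) = -P g := by
  rw [hP.apply_mul_Sz, hP.apply_mul_Sz_mul_Sz]

lemma apply_mul_T (hP : ManinRelations P) (g : SL(2, ℤ)) : P (g * T) = P g + P (g * Rz) := by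
  rw [← Rz_sq_mul_Sz, ← mul_assoc, hP.apply_mul_Sz, neg_eq_iff_add_eq_zero, add_comm]
  exact hP.add_mul_Rz_add_mul_Rz_sq g

lemma eq_zero_of_pos_of_nonneg (hP : ManinRelations P) (hred : ∀ g, IsReduced g → P g = 0)
    (g : SL(2, ℤ)) (hc : 0 < g 1 0) (hd : 0 ≤ g 1 1) : P g = 0 := by
  by_cases hdc : g 1 1 < g 1 0
  · exact hred g ⟨hd, hdc⟩
  -- `g = g' * T`, where `g'` has a smaller bottom-right entry and `g' * Rz * Sz³` is reduced
  set g' := g * T⁻¹ with hg'_def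
  have hg' : P g' = 0 :=
    hP.eq_zero_of_pos_of_nonneg hred g' (by simpa [g', coe_mul_apply] using hc)
      (by simp [g', coe_mul_apply]; omega)
  have hg'R : P (g' * Rz) = 0 := by
    have := hred (g' * Rz * Sz * Sz * Sz)
      ⟨by simp [g', coe_mul_apply, coe_Rz, coe_Sz]; omega,
        by simp [g', coe_mul_apply, coe_Rz, coe_Sz]; omega⟩
    rwa [hP.apply_mul_Sz_mul_Sz_mul_Sz, neg_eq_zero] at this
  rw [← inv_mul_cancel_right g T, ← hg'_def, hP.apply_mul_T, hg', hg'R, add_zero]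
termination_by (g 1 1).toNat
decreasing_by simp [coe_mul_apply]; omega

lemma eq_zero_of_pos (hP : ManinRelations P) (hred : ∀ g, IsReduced g → P g = 0)
    (g : SL(2, ℤ)) (hc : 0 < g 1 0) : P g = 0 := by
  rcases le_or_gt 0 (g 1 1) with hd | hd
  · exact hP.eq_zero_of_pos_of_nonneg hred g hc hd
  · have := hP.eq_zero_of_pos_of_nonneg hred (g * Sz * Sz * Sz)
      (by simp [coe_mul_apply, coe_Sz]; omega) (by simp [coe_mul_apply, coe_Sz]; omega)
    rwa [hP.apply_mul_Sz_mul_Sz_mul_Sz, neg_eq_zero] at this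

lemma eq_zero_of_ne_zero (hP : ManinRelations P) (hred : ∀ g, IsReduced g → P g = 0)
    (g : SL(2, ℤ)) (hc : g 1 0 ≠ 0) : P g = 0 := by
  rcases hc.lt_or_gt with hc | hc
  · rw [← hP.apply_mul_Sz_mul_Sz]
    exact hP.eq_zero_of_pos hred _ (by simp [coe_mul_apply, coe_Sz]; omega)
  · exact hP.eq_zero_of_pos hred g hc

theorem eq_zero (hP : ManinRelations P) (hred : ∀ g, IsReduced g → P g = 0) (g : SL(2, ℤ)) :
    P g = 0 := by
  by_cases hc : g 1 0 = 0
  · have hd : g 1 1 ≠ 0 := by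
      intro hd; simpa [hc, hd] using det_eq_one g
    rw [← neg_eq_zero, ← hP.apply_mul_Sz]
    exact hP.eq_zero_of_ne_zero hred _ (by simpa [coe_mul_apply, coe_Sz] using hd)
  · exact hP.eq_zero_of_ne_zero hred g hc

end ManinRelations

open Classical in
def cuspPotential (F : SL(2, ℤ) → A) (x : ProjLine) : A :=
  if h : ∃ g, IsReduced g ∧ toGL2Q g • inftyPt = x then
    cuspPotential F (toGL2Q h.choose • zeroPt) + F h.choose
  else 0
termination_by cuspDen x
decreasing_by
  have := h.choose_spec.1.cuspDen_smul_zeroPt_lt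
  rwa [h.choose_spec.2] at this

lemma cuspPotential_smul_inftyPt (F : SL(2, ℤ) → A) {g : SL(2, ℤ)} (hg : IsReduced g) :
    cuspPotential F (toGL2Q g • inftyPt) = cuspPotential F (toGL2Q g • zeroPt) + F g := by
  have h : ∃ g', IsReduced g' ∧ toGL2Q g' • inftyPt = toGL2Q g • inftyPt := ⟨g, hg, rfl⟩
  rw [cuspPotential, dif_pos h, h.choose_spec.1.eq_of_smul_inftyPt_eq hg h.choose_spec.2]

theorem ManinRelations.cuspPotential_sub {F : SL(2, ℤ) → A} (hF : ManinRelations F)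
    (g : SL(2, ℤ)) :
    cuspPotential F (toGL2Q g • inftyPt) - cuspPotential F (toGL2Q g • zeroPt) = F g := by
  set ψ := cuspPotential F
  rw [← sub_eq_zero]
  refine ManinRelations.eq_zero
    (P := fun g => ψ (toGL2Q g • inftyPt) - ψ (toGL2Q g • zeroPt) - F g)
    ⟨fun g => ?_, fun g => ?_⟩ (fun g hg => ?_) g
  · simp only [mul_Sz_smul_inftyPt, mul_Sz_smul_zeroPt, hF.apply_mul_Sz]
    abel
  · simp only [mul_Rz_smul_inftyPt, mul_Rz_sq_smul_inftyPt, mul_Rz_sq_smul_zeroPt]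
    rw [← neg_eq_zero, ← hF.add_mul_Rz_add_mul_Rz_sq g]
    abel
  · simp only [ψ, cuspPotential_smul_inftyPt F hg]
    abel

def potentialHom (ψ : ProjLine → A) : Delta0 →+ A :=
  (Finsupp.linearCombination ℤ ψ).toAddMonoidHom.comp Delta0.subtype

lemma potentialHom_pointDiff (ψ : ProjLine → A) (x y : ProjLine) :
    potentialHom ψ (pointDiff x y) = ψ x - ψ y := by
  simp [potentialHom, coe_pointDiff]

lemma maninRelations_apply_smulDiv_Dinf (φ : Delta0 →+ A) :
    ManinRelations fun g => φ (smulDiv (toGL2Q g) Dinf) := by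
  constructor <;> intro g
  · have := congrArg (φ.comp (smulDivHom (toGL2Q g))) Dinf_add_smulDiv_Sz
    rw [map_add, map_zero] at this
    simpa [smulDivHom_apply, smulDiv_mul] using this
  · have := congrArg (φ.comp (smulDivHom (toGL2Q g))) Dinf_add_smulDiv_Rz_add_smulDiv_Rz_sq
    rw [map_add, map_add, map_zero] at this
    simpa [smulDivHom_apply, smulDiv_mul] using this

lemma mem_ManGroup_iff (f : Quotient (QuotientGroup.rightRel Γ) → M) :
    f ∈ ManGroup Γ M ↔ ManinRelations fun g => f (Quotient.mk _ g) :=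
  ⟨fun hf => ⟨fun _ => (hf _).1, fun _ => (hf _).2⟩,
    fun hf x => Quotient.inductionOn x fun g => ⟨hf.1 g, hf.2 g⟩⟩

variable {Γ} in
lemma mk_mul_of_mem {γ : SL(2, ℤ)} (hγ : γ ∈ Γ) (g : SL(2, ℤ)) :
    Quotient.mk (QuotientGroup.rightRel Γ) (γ * g) = Quotient.mk _ g :=
  Quotient.sound (QuotientGroup.rightRel_apply.2 (by simpa using inv_mem hγ))

def maninSymbol (φ : SymbGroup Γ M) : Quotient (QuotientGroup.rightRel Γ) → M :=
  Quotient.lift (fun g => φ.1 (smulDiv (toGL2Q g) Dinf)) fun a b hab => by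
    have hba : b * a⁻¹ ∈ Γ := QuotientGroup.rightRel_apply.1 hab
    rw [← φ.2 _ hba, ← smulDiv_mul, ← map_mul, inv_mul_cancel_right]

def symbToMan : SymbGroup Γ M →+ ManGroup Γ M :=
  AddMonoidHom.mk'
    (fun φ => ⟨maninSymbol Γ M φ,
      (mem_ManGroup_iff Γ M _).2 (maninRelations_apply_smulDiv_Dinf φ.1)⟩)
    fun _ _ => Subtype.ext (funext fun x => Quotient.inductionOn x fun _ => rfl)

lemma symbToMan_injective : Function.Injective (symbToMan Γ M) := by
  refine (injective_iff_map_eq_zero _).2 fun φ hφ => Subtype.ext (hom_ext fun g => ?_)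
  exact congrFun (congrArg Subtype.val hφ) (Quotient.mk _ g)

lemma symbToMan_surjective : Function.Surjective (symbToMan Γ M) := by
  rintro ⟨f, hf⟩
  set F : SL(2, ℤ) → M := fun g => f (Quotient.mk _ g)
  set φ := potentialHom (cuspPotential F)
  have hF : ManinRelations F := (mem_ManGroup_iff Γ M f).1 hf
  have hφ (g : SL(2, ℤ)) : φ (smulDiv (toGL2Q g) Dinf) = F g := by
    rw [Dinf_eq_pointDiff, smulDiv_pointDiff, potentialHom_pointDiff, hF.cuspPotential_sub]
  have hmem : φ ∈ SymbGroup Γ M := fun γ hγ =>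
    DFunLike.congr_fun (hom_ext (φ₁ := φ.comp (smulDivHom (toGL2Q γ))) (φ₂ := φ) fun g => by
      simp only [AddMonoidHom.comp_apply, smulDivHom_apply, ← smulDiv_mul, ← map_mul, hφ, F,
        mk_mul_of_mem hγ])
  exact ⟨⟨φ, hmem⟩, Subtype.ext (funext fun x => Quotient.inductionOn x hφ)⟩

end Manin

theorem symb_equiv_manin :
    ∃ e : SymbGroup Γ M ≃+ ManGroup Γ M,
      ∀ (φ : SymbGroup Γ M) (γ : Matrix.SpecialLinearGroup (Fin 2) ℤ),
        (e φ).1 (Quotient.mk (QuotientGroup.rightRel Γ) γ)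
          = φ.1 (smulDiv (toGL2Q γ) Dinf) :=
  ⟨AddEquiv.ofBijective (Manin.symbToMan Γ M)
    ⟨Manin.symbToMan_injective Γ M, Manin.symbToMan_surjective Γ M⟩, fun _ _ => rfl⟩
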